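/- arXiv:1512.04267 — 3 statements merged into one kernel-verified Lean document; each statement's English description precedes it below -/
import Mathlib

section
/- If Y is uniformly distributed on the unit ball B_{0,1} in R^d and B = B_{1̄,1} with 1̄ = (1,0,…,0), then P{Y ∈ B} = λ(B_{0,1} ∩ B)/λ(B_{0,1}) ≤ (3/4)^{d/2}. -/
open MeasureTheory ProbabilityTheory

/-- The vector `1̄ = (1,0,…,0)` in `ℝ^d`. -/
noncomputable def oneVec (d : ℕ) : EuclideanSpace ℝ (Fin d) :=
  (WithLp.equiv 2 (Fin d → ℝ)).symm (fun i => if i.val = 0 then 1 else 0)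

lemma norm_oneVec (d : ℕ) (hd : 0 < d) : ‖oneVec d‖ = 1 := by
  rw [EuclideanSpace.norm_eq]
  have hs : ∑ i : Fin d, ‖oneVec d i‖ ^ 2 = 1 := by
    rw [Finset.sum_eq_single (⟨0, hd⟩ : Fin d)]
    · simp [oneVec]
    · intro i _ hi
      have : (i : ℕ) ≠ 0 := fun h => hi (Fin.ext h)
      simp [oneVec, this]
    · simp
  rw [hs, Real.sqrt_one]

/-- If `Y` is uniform on the unit ball of `ℝ^d` and `B = B_{1̄,1}`, then
`P{Y ∈ B} = λ(B_{0,1} ∩ B)/λ(B_{0,1}) ≤ (3/4)^{d/2}`. -/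
theorem prob_Y_in_B
    (d : ℕ) (hd : 0 < d)
    {Ω : Type*} [MeasurableSpace Ω] (P : Measure Ω) [IsProbabilityMeasure P]
    (Y : Ω → EuclideanSpace ℝ (Fin d)) (hYmeas : Measurable Y)
    (hY : Measure.map Y P =
      (volume (Metric.closedBall (0 : EuclideanSpace ℝ (Fin d)) 1))⁻¹ •
        volume.restrict (Metric.closedBall (0 : EuclideanSpace ℝ (Fin d)) 1)) :
    (P {ω | Y ω ∈ Metric.closedBall (oneVec d) 1}).toReal =
      (volume (Metric.closedBall (0 : EuclideanSpace ℝ (Fin d)) 1 ∩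
          Metric.closedBall (oneVec d) 1)).toReal /
        (volume (Metric.closedBall (0 : EuclideanSpace ℝ (Fin d)) 1)).toReal ∧
    (P {ω | Y ω ∈ Metric.closedBall (oneVec d) 1}).toReal ≤
      ((3 : ℝ) / 4) ^ ((d : ℝ) / 2) := by
  set e := oneVec d with he
  set B0 := Metric.closedBall (0 : EuclideanSpace ℝ (Fin d)) 1 with hB0
  set B1 := Metric.closedBall e 1 with hB1
  have hvol_pos : 0 < volume B0 := Metric.measure_closedBall_pos _ _ one_pos
  have hvol_fin : volume B0 < ⊤ := measure_closedBall_lt_top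
  have h1 : P {ω | Y ω ∈ B1} = (volume B0)⁻¹ * volume (B0 ∩ B1) := by
    have hm := Measure.map_apply (μ := P) hYmeas (Metric.isClosed_closedBall.measurableSet : MeasurableSet B1)
    rw [show {ω | Y ω ∈ B1} = Y ⁻¹' B1 from rfl, ← hm, hY, Measure.smul_apply, smul_eq_mul,
      Measure.restrict_apply' Metric.isClosed_closedBall.measurableSet, Set.inter_comm]
  have heq : (P {ω | Y ω ∈ B1}).toReal = (volume (B0 ∩ B1)).toReal / (volume B0).toReal := by
    rw [h1, ENNReal.toReal_mul, ENNReal.toReal_inv, inv_mul_eq_div]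
  refine ⟨heq, ?_⟩
  -- containment in small ball
  have hne : ‖e‖ = 1 := norm_oneVec d hd
  have hsub : B0 ∩ B1 ⊆ Metric.closedBall ((1/2 : ℝ) • e) (Real.sqrt (3/4)) := by
    rintro x ⟨hx0, hx1⟩
    rw [Metric.mem_closedBall, dist_zero_right] at hx0
    rw [Metric.mem_closedBall, dist_eq_norm] at hx1
    rw [Metric.mem_closedBall, dist_eq_norm]
    have ha : (x - (1/2 : ℝ) • e) + (1/2 : ℝ) • e = x := by abel
    have hb : (x - (1/2 : ℝ) • e) - (1/2 : ℝ) • e = x - e := by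
      rw [sub_sub, ← add_smul]; norm_num
    have hpar := parallelogram_law_with_norm ℝ (x - (1/2 : ℝ) • e) ((1/2 : ℝ) • e)
    rw [ha, hb] at hpar
    have hhalf : ‖(1/2 : ℝ) • e‖ = 1/2 := by
      rw [norm_smul, hne]; norm_num
    set t := ‖x - (1/2 : ℝ) • e‖ with ht
    have ht0 : 0 ≤ t := norm_nonneg _
    have hx0' : 0 ≤ ‖x‖ := norm_nonneg _
    have hx1' : 0 ≤ ‖x - e‖ := norm_nonneg _
    have hsq : t ^ 2 ≤ 3/4 := by nlinarith [hpar, hhalf]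
    rw [show (Real.sqrt (3/4)) = Real.sqrt (3/4) from rfl]
    exact (Real.le_sqrt ht0 (by norm_num)).mpr hsq
  have hfr : Module.finrank ℝ (EuclideanSpace ℝ (Fin d)) = d := finrank_euclideanSpace_fin
  have hr0 : (0:ℝ) ≤ Real.sqrt (3/4) := Real.sqrt_nonneg _
  have hvol_le : volume (B0 ∩ B1) ≤ ENNReal.ofReal (Real.sqrt (3/4) ^ d) * volume B0 := by
    calc volume (B0 ∩ B1) ≤ volume (Metric.closedBall ((1/2 : ℝ) • e) (Real.sqrt (3/4))) :=
          measure_mono hsub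
      _ = ENNReal.ofReal (Real.sqrt (3/4) ^ d) * volume B0 := by
          rw [Measure.addHaar_closedBall' volume _ hr0, hfr]
  have hfin : ENNReal.ofReal (Real.sqrt (3/4) ^ d) * volume B0 ≠ ⊤ :=
    ENNReal.mul_ne_top ENNReal.ofReal_ne_top hvol_fin.ne
  have htr : (volume (B0 ∩ B1)).toReal ≤ Real.sqrt (3/4) ^ d * (volume B0).toReal := by
    have := ENNReal.toReal_mono hfin hvol_le
    rwa [ENNReal.toReal_mul, ENNReal.toReal_ofReal (pow_nonneg hr0 d)] at this
  have hposr : 0 < (volume B0).toReal := ENNReal.toReal_pos hvol_pos.ne' hvol_fin.ne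
  have hrpow : ((3 : ℝ)/4) ^ ((d : ℝ)/2) = Real.sqrt (3/4) ^ d := by
    rw [Real.sqrt_eq_rpow, ← Real.rpow_natCast (((3:ℝ)/4) ^ ((1:ℝ)/2)) d,
      ← Real.rpow_mul (by norm_num : (0:ℝ) ≤ 3/4)]
    ring_nf
  rw [heq, hrpow, div_le_iff₀ hposr]
  exact htr
end

section
/- Let Z(x) ≥ 0 be a random variable such that lim_{z↓0} P{Z(x) ≤ z}/z^k = c for some constant c ≥ 0, and suppose Z(x) ≤ 1 a.s. Then lim_{n→∞} n^k E[(1−Z(x))^{n−1}] = c·k!. -/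
/-!
Write `F u = P{Z ≤ u}`. The layer cake formula gives
`E[(1 - Z)^(m+1)] = (m + 1) ∫₀¹ F(u) (1 - u)^m du`, and the substitution `u = t / m` turns
`m^(k+1) ∫₀¹ F(u) (1 - u)^m du` into `∫₀^m t^k (F(t/m) / (t/m)^k) (1 - t/m)^m dt`. The integrand
tends to `c t^k e^(-t)` and is dominated by `C t^k e^(-t)`, because `F(u) ≤ C u^k` on `(0, 1]`
and `(1 - t/m)^m ≤ e^(-t)`; so the integrals tend to `c Γ(k + 1) = c k!`.
-/

open MeasureTheory Filter Set Real Topology Nat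

lemma integral_pow_succ_eq_integral_meas_le {α : Type*} [MeasurableSpace α] {μ : Measure α}
    [IsFiniteMeasure μ] {f : α → ℝ} (hf : AEMeasurable f μ) (hf_nn : 0 ≤ᵐ[μ] f) (m : ℕ) :
    ∫ a, f a ^ (m + 1) ∂μ = ∫ t in Ioi 0, μ.real {a | t ≤ f a} * ((m + 1) * t ^ m) := by
  have h_layer_cake := lintegral_comp_eq_lintegral_meas_le_mul μ hf_nn hf
    (g := fun t => ((m : ℝ) + 1) * t ^ m)
    (fun t _ => (by fun_prop : Continuous _).intervalIntegrable _ _)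
    ((ae_restrict_mem measurableSet_Ioi).mono fun t (ht : 0 < t) => by positivity)
  have h_inner : ∀ x : ℝ, ∫ t in (0 : ℝ)..x, ((m : ℝ) + 1) * t ^ m = x ^ (m + 1) := fun x => by
    rw [intervalIntegral.integral_const_mul, integral_pow]
    field_simp
    simp
  have h_tail_meas : Measurable fun t => μ.real {a | t ≤ f a} :=
    Antitone.measurable fun s t hst => measureReal_mono fun a (ha : t ≤ f a) => hst.trans ha
  rw [integral_eq_lintegral_of_nonneg_ae (hf_nn.mono fun a h => pow_nonneg h _)
      (hf.pow_const _).aestronglyMeasurable,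
    integral_eq_lintegral_of_nonneg_ae
      ((ae_restrict_mem measurableSet_Ioi).mono fun t (ht : 0 < t) => by positivity)
      (by fun_prop : Measurable _).aestronglyMeasurable]
  simp only [h_inner] at h_layer_cake
  rw [h_layer_cake]
  congr 1
  refine lintegral_congr fun t => ?_
  rw [ENNReal.ofReal_mul measureReal_nonneg, ofReal_measureReal]

lemma integral_one_sub_pow_succ_eq {Ω : Type*} [MeasurableSpace Ω] {P : Measure Ω}
    [IsFiniteMeasure P] {Z : Ω → ℝ} (hZ : AEMeasurable Z P)
    (h01 : ∀ᵐ ω ∂P, 0 ≤ Z ω ∧ Z ω ≤ 1) (m : ℕ) :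
    ∫ ω, (1 - Z ω) ^ (m + 1) ∂P
      = (m + 1) * ∫ u in (0 : ℝ)..1, P.real {ω | Z ω ≤ u} * (1 - u) ^ m := by
  have h_neg_null : P {ω | Z ω < 0} = 0 :=
    measure_eq_zero_iff_ae_notMem.mpr (h01.mono fun ω h => not_lt.mpr h.1)
  have h_vanish : ∀ t ∈ Ioi (0 : ℝ) \ Ioc 0 1,
      P.real {ω | t ≤ 1 - Z ω} * ((m + 1) * t ^ m) = 0 := by
    rintro t ⟨ht0, ht⟩
    have ht1 : 1 < t := not_le.mp fun h => ht ⟨ht0, h⟩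
    have h_null : P {ω | t ≤ 1 - Z ω} = 0 :=
      measure_mono_null (fun ω (h : t ≤ 1 - Z ω) => (by linarith : Z ω < 0)) h_neg_null
    rw [measureReal_def, h_null, ENNReal.toReal_zero, zero_mul]
  rw [integral_pow_succ_eq_integral_meas_le (f := fun ω => 1 - Z ω) (hZ.const_sub 1)
      (h01.mono fun ω h => sub_nonneg.mpr h.2),
    setIntegral_eq_of_subset_of_forall_sdiff_eq_zero measurableSet_Ioi Ioc_subset_Ioi_self
      h_vanish, ← intervalIntegral.integral_of_le zero_le_one,
    ← intervalIntegral.integral_const_mul]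
  have h_reflect := intervalIntegral.integral_comp_sub_left (a := 0) (b := 1)
    (fun u => ((m : ℝ) + 1) * (P.real {ω | Z ω ≤ u} * (1 - u) ^ m)) 1
  simp only [sub_sub_cancel, sub_zero, sub_self] at h_reflect
  rw [← h_reflect]
  simp_rw [le_sub_comm (b := (1 : ℝ))]
  congr with t
  ring

lemma integrableOn_pow_mul_exp_neg_Ioi (k : ℕ) :
    IntegrableOn (fun t : ℝ => t ^ k * exp (-t)) (Ioi 0) := by
  refine (GammaIntegral_convergent (s := k + 1) (by positivity)).congr_fun
    (fun t _ => ?_) measurableSet_Ioi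
  simp [mul_comm]

lemma integral_pow_mul_exp_neg_Ioi (k : ℕ) :
    ∫ t in Ioi (0 : ℝ), t ^ k * exp (-t) = k ! := by
  rw [← Gamma_nat_eq_factorial, Gamma_eq_integral (by positivity)]
  refine setIntegral_congr_fun measurableSet_Ioi (fun t _ => ?_)
  simp [mul_comm]

lemma tendsto_div_natCast_nhdsGT_zero {t : ℝ} (ht : 0 < t) :
    Tendsto (fun m : ℕ => t / m) atTop (𝓝[>] 0) :=
  tendsto_nhdsWithin_iff.mpr ⟨tendsto_const_div_atTop_nhds_zero_nat t,
    (eventually_gt_atTop 0).mono fun _ hm => div_pos ht (Nat.cast_pos.mpr hm)⟩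

lemma exists_abs_le_mul_pow_of_tendsto_div_pow {F : ℝ → ℝ} {k : ℕ} {c B : ℝ}
    (hF : Tendsto (fun u => F u / u ^ k) (𝓝[>] 0) (𝓝 c))
    (hB : ∀ u ∈ Ioc (0 : ℝ) 1, |F u| ≤ B) :
    ∃ C, ∀ u ∈ Ioc (0 : ℝ) 1, |F u| ≤ C * u ^ k := by
  obtain ⟨δ, hδ, hnear⟩ := mem_nhdsGT_iff_exists_Ioo_subset.mp
    (hF.abs.eventually (gt_mem_nhds (lt_add_one |c|)))
  refine ⟨max (|c| + 1) (B / min δ 1 ^ k), fun u hu => ?_⟩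
  have hu0 : 0 < u ^ k := pow_pos hu.1 k
  rcases lt_or_ge u δ with huδ | hδu
  · have h : |F u / u ^ k| < |c| + 1 := hnear ⟨hu.1, huδ⟩
    rw [abs_div, abs_of_pos hu0, div_lt_iff₀ hu0] at h
    exact h.le.trans (by gcongr; exact le_max_left _ _)
  · have hδ' : 0 < min δ 1 ^ k := pow_pos (lt_min hδ one_pos) k
    have hB0 : 0 ≤ B := (abs_nonneg _).trans (hB u hu)
    calc |F u| ≤ B / min δ 1 ^ k * u ^ k := by
          rw [div_mul_eq_mul_div, le_div_iff₀ hδ']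
          exact mul_le_mul (hB u hu)
            (pow_le_pow_left₀ (lt_min hδ one_pos).le (min_le_of_left_le hδu) k) hδ'.le hB0
      _ ≤ _ := by gcongr; exact le_max_right _ _

lemma pow_succ_mul_integral_eq_integral_comp_div (F : ℝ → ℝ) (k : ℕ) {m : ℕ} (hm : m ≠ 0) :
    (m : ℝ) ^ (k + 1) * ∫ u in (0 : ℝ)..1, F u * (1 - u) ^ m
      = ∫ t in (0 : ℝ)..m, (m : ℝ) ^ k * F (t / m) * (1 - t / m) ^ m := by
  have hm' : (m : ℝ) ≠ 0 := Nat.cast_ne_zero.mpr hm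
  simp_rw [mul_assoc, intervalIntegral.integral_const_mul,
    intervalIntegral.integral_comp_div (fun u => F u * (1 - u) ^ m) hm', zero_div, div_self hm',
    smul_eq_mul]
  ring

lemma abs_pow_mul_comp_div_mul_one_sub_pow_le {F : ℝ → ℝ} {k m : ℕ} {C t : ℝ}
    (hC : ∀ u ∈ Ioc (0 : ℝ) 1, |F u| ≤ C * u ^ k) (ht : 0 < t) (htm : t ≤ m) :
    |(m : ℝ) ^ k * F (t / m) * (1 - t / m) ^ m| ≤ C * (t ^ k * exp (-t)) := by
  have hm : (0 : ℝ) < m := ht.trans_le htm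
  have htm' : t / m ∈ Ioc (0 : ℝ) 1 := ⟨div_pos ht hm, (div_le_one hm).mpr htm⟩
  have h1 : 0 ≤ 1 - t / m := sub_nonneg.mpr htm'.2
  have hF := hC _ htm'
  rw [abs_mul, abs_mul, abs_of_nonneg (pow_nonneg h1 m), abs_of_nonneg (pow_nonneg hm.le k)]
  calc (m : ℝ) ^ k * |F (t / m)| * (1 - t / m) ^ m
      ≤ (m : ℝ) ^ k * (C * (t / m) ^ k) * exp (-t) :=
        mul_le_mul (mul_le_mul_of_nonneg_left hF (by positivity))
          (one_sub_div_pow_le_exp_neg htm) (pow_nonneg h1 m)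
          (mul_nonneg (by positivity) ((abs_nonneg _).trans hF))
    _ = C * (t ^ k * exp (-t)) := by rw [div_pow]; field_simp

lemma tendsto_pow_mul_comp_div_mul_one_sub_pow {F : ℝ → ℝ} {k : ℕ} {c t : ℝ}
    (hF : Tendsto (fun u => F u / u ^ k) (𝓝[>] 0) (𝓝 c)) (ht : 0 < t) :
    Tendsto (fun m : ℕ => (m : ℝ) ^ k * F (t / m) * (1 - t / m) ^ m)
      atTop (𝓝 (c * (t ^ k * exp (-t)))) := by
  have h_exp : Tendsto (fun m : ℕ => (1 - t / m) ^ m) atTop (𝓝 (exp (-t))) := by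
    simpa [neg_div, ← sub_eq_add_neg] using tendsto_one_add_div_pow_exp (-t)
  have h_lim := ((hF.comp (tendsto_div_natCast_nhdsGT_zero ht)).const_mul (t ^ k)).mul h_exp
  rw [show c * (t ^ k * exp (-t)) = t ^ k * c * exp (-t) by ring]
  refine h_lim.congr' ?_
  filter_upwards [eventually_ne_atTop 0] with m hm
  have hm0 : (m : ℝ) ≠ 0 := Nat.cast_ne_zero.mpr hm
  have ht0 : t ^ k ≠ 0 := pow_ne_zero k ht.ne'
  simp only [Function.comp_apply, div_pow]
  field_simp

lemma tendsto_integral_pow_mul_comp_div {F : ℝ → ℝ} {k : ℕ} {c C : ℝ} (hFm : Measurable F)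
    (hF : Tendsto (fun u => F u / u ^ k) (𝓝[>] 0) (𝓝 c))
    (hC : ∀ u ∈ Ioc (0 : ℝ) 1, |F u| ≤ C * u ^ k) :
    Tendsto (fun m : ℕ => ∫ t in (0 : ℝ)..m, (m : ℝ) ^ k * F (t / m) * (1 - t / m) ^ m)
      atTop (𝓝 (c * k !)) := by
  let f : ℕ → ℝ → ℝ := fun m =>
    indicator (Ioc 0 (m : ℝ)) fun t => (m : ℝ) ^ k * F (t / m) * (1 - t / m) ^ m
  have hf_meas : ∀ m, AEStronglyMeasurable (f m) (volume.restrict (Ioi 0)) := fun m =>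
    ((by fun_prop : Measurable fun t : ℝ => (m : ℝ) ^ k * F (t / m) * (1 - t / m) ^ m).indicator
      measurableSet_Ioc).aestronglyMeasurable
  have hC0 : 0 ≤ C := by simpa using (abs_nonneg _).trans (hC 1 ⟨one_pos, le_rfl⟩)
  have hf_bound : ∀ m, ∀ᵐ t ∂volume.restrict (Ioi 0), ‖f m t‖ ≤ C * (t ^ k * exp (-t)) := by
    intro m
    filter_upwards [ae_restrict_mem measurableSet_Ioi] with t (ht : 0 < t)
    by_cases htm : t ≤ m
    · rw [show f m t = _ from indicator_of_mem (show t ∈ Ioc 0 (m : ℝ) from ⟨ht, htm⟩) _,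
        Real.norm_eq_abs]
      exact abs_pow_mul_comp_div_mul_one_sub_pow_le hC ht htm
    · rw [show f m t = 0 from indicator_of_notMem (fun h => htm h.2) _, norm_zero]
      positivity
  have hf_lim : ∀ᵐ t ∂volume.restrict (Ioi 0),
      Tendsto (fun m => f m t) atTop (𝓝 (c * (t ^ k * exp (-t)))) := by
    filter_upwards [ae_restrict_mem measurableSet_Ioi] with t (ht : 0 < t)
    refine (tendsto_pow_mul_comp_div_mul_one_sub_pow hF ht).congr' ?_
    filter_upwards [eventually_ge_atTop ⌈t⌉₊] with m hm
    simp only [f, indicator_of_mem (show t ∈ Ioc 0 (m : ℝ) from ⟨ht, Nat.ceil_le.mp hm⟩)]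
  have h := tendsto_integral_of_dominated_convergence _ hf_meas
    ((integrableOn_pow_mul_exp_neg_Ioi k).const_mul C) hf_bound hf_lim
  rw [integral_const_mul, integral_pow_mul_exp_neg_Ioi] at h
  refine h.congr fun m => ?_
  rw [integral_indicator measurableSet_Ioc,
    Measure.restrict_restrict_of_subset Ioc_subset_Ioi_self,
    intervalIntegral.integral_of_le (Nat.cast_nonneg m)]

lemma tendsto_pow_succ_mul_integral_mul_one_sub_pow {F : ℝ → ℝ} {k : ℕ} {c B : ℝ}
    (hFm : Measurable F) (hF : Tendsto (fun u => F u / u ^ k) (𝓝[>] 0) (𝓝 c))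
    (hB : ∀ u ∈ Ioc (0 : ℝ) 1, |F u| ≤ B) :
    Tendsto (fun m : ℕ => (m : ℝ) ^ (k + 1) * ∫ u in (0 : ℝ)..1, F u * (1 - u) ^ m)
      atTop (𝓝 (c * k !)) := by
  obtain ⟨C, hC⟩ := exists_abs_le_mul_pow_of_tendsto_div_pow hF hB
  refine (tendsto_integral_pow_mul_comp_div hFm hF hC).congr' ?_
  filter_upwards [eventually_ne_atTop 0] with m hm
  exact (pow_succ_mul_integral_eq_integral_comp_div F k hm).symm

lemma tendsto_add_two_pow_mul_add_one_div_pow (k : ℕ) :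
    Tendsto (fun m : ℕ => ((m : ℝ) + 2) ^ k * ((m : ℝ) + 1) / (m : ℝ) ^ (k + 1)) atTop (𝓝 1) := by
  have h : ∀ a : ℝ, Tendsto (fun m : ℕ => 1 + a / m) atTop (𝓝 1) := fun a => by
    simpa using tendsto_const_nhds.add (tendsto_const_div_atTop_nhds_zero_nat a)
  have h_lim : Tendsto (fun m : ℕ => (1 + 2 / (m : ℝ)) ^ k * (1 + 1 / m)) atTop (𝓝 1) := by
    simpa using ((h 2).pow k).mul (h 1)
  refine h_lim.congr' ?_
  filter_upwards [eventually_ne_atTop 0] with m hm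
  have hm' : (m : ℝ) ≠ 0 := Nat.cast_ne_zero.mpr hm
  rw [one_add_div hm', one_add_div hm', div_pow, pow_succ]
  field_simp

theorem nk_expectation_limit_general
    (k : ℕ) (c : ℝ)
    {Ω : Type*} [MeasurableSpace Ω] (P : Measure Ω) [IsProbabilityMeasure P]
    (Z : Ω → ℝ) (hZmeas : Measurable Z)
    (hZ : ∀ᵐ ω ∂P, 0 ≤ Z ω ∧ Z ω ≤ 1)
    (hlim : Tendsto (fun z : ℝ => (P {ω | Z ω ≤ z}).toReal / z ^ k)
      (nhdsWithin 0 (Set.Ioi 0)) (nhds c)) :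
    Tendsto (fun n : ℕ => (n : ℝ) ^ k * ∫ ω, (1 - Z ω) ^ (n - 1) ∂P)
      atTop (nhds (c * Nat.factorial k)) := by
  have hF_mono : Monotone fun u => P.real {ω | Z ω ≤ u} :=
    fun u v huv => measureReal_mono fun ω (h : Z ω ≤ u) => h.trans huv
  have hF_bound : ∀ u ∈ Ioc (0 : ℝ) 1, |P.real {ω | Z ω ≤ u}| ≤ 1 := fun u _ => by
    rw [abs_of_nonneg measureReal_nonneg]
    exact measureReal_le_one
  have h_moment := (tendsto_add_two_pow_mul_add_one_div_pow k).mul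
    (tendsto_pow_succ_mul_integral_mul_one_sub_pow hF_mono.measurable hlim hF_bound)
  rw [← tendsto_add_atTop_iff_nat 2, ← one_mul (c * _)]
  refine h_moment.congr' ?_
  filter_upwards [eventually_ne_atTop 0] with m hm
  have hm' : (m : ℝ) ≠ 0 := Nat.cast_ne_zero.mpr hm
  rw [show m + 2 - 1 = m + 1 by omega, integral_one_sub_pow_succ_eq hZmeas.aemeasurable hZ]
  push_cast
  field_simp

/-- If `Z` is a `[0,1]`-valued random variable with
`P{Z ≤ z}/z^k → c` as `z ↓ 0`, then `n^k · E[(1−Z)^{n−1}] → c·k!`. -/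
theorem nk_expectation_limit
    (k : ℕ) (hk : 1 ≤ k) (c : ℝ) (hc : 0 ≤ c)
    {Ω : Type*} [MeasurableSpace Ω] (P : Measure Ω) [IsProbabilityMeasure P]
    (Z : Ω → ℝ) (hZmeas : Measurable Z)
    (hZ : ∀ᵐ ω ∂P, 0 ≤ Z ω ∧ Z ω ≤ 1)
    (hlim : Tendsto (fun z : ℝ => (P {ω | Z ω ≤ z}).toReal / z ^ k)
      (nhdsWithin 0 (Set.Ioi 0)) (nhds c)) :
    Tendsto (fun n : ℕ => (n : ℝ) ^ k * ∫ ω, (1 - Z ω) ^ (n - 1) ∂P)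
      atTop (nhds (c * Nat.factorial k)) :=
  nk_expectation_limit_general k c P Z hZmeas hZ hlim
end

section
/- Let μ have density f on R^d, let x satisfy f(x) > 0 and the cone-version Lebesgue density property: for a finite family of cones C_1,…,C_γ of angle π/4 covering R^d, min_j (∫_{x+r[C_j∩B_{0,1}]} f)/λ(r[C_j∩B_{0,1}]) → f(x) as r↓0. Then, conditionally on X_1 = x, the diameter of the Voronoi cell S_1 satisfies lim_{t→∞} limsup_{n→∞} P{n^{1/d} diam(S_1) ≥ t | X_1 = x} = 0. -/
/-!
Fix `t > 0` and let `ρ = t / (3 n^{1/d})`. If every truncated punctured cone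
`x + (C_j ∩ B(0, ρ)) \ {x}` contains a sample point, the cell lies in `B(x, ρ)`: a point `y`
of the cell with `‖y - x‖ > ρ` has `y - x` in some `C_j`, and a sample point `x + z` with
`z ∈ C_j`, `0 < ‖z‖ ≤ ‖y - x‖` is strictly closer to `y` than `x` is, since two vectors of a cone
of half-angle `π/8` make an angle below `π/3`. By the density property each such region has mass
at least `q_j ρ^d = q_j (t/3)^d / n` for large `n`, so one of them misses all `n - 1` independent
points with probability at most `∑_j exp(-q_j (t/3)^d / 2)`, which tends to `0` as `t → ∞`.
The density property also forces `μ {x} = 0`, so removing the centre costs nothing.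
-/

open MeasureTheory ProbabilityTheory Filter
open scoped ENNReal

open Set Metric Real InnerProductGeometry Topology
open scoped RealInnerProductSpace

def voronoiCell {α ι : Type*} [PseudoMetricSpace α] (x : α) (p : ι → α) (s : Finset ι) :
    Set α :=
  {u | ∀ i ∈ s, dist u x ≤ dist u (p i)}

lemma one_sub_pow_pred_le_exp {p : ℝ≥0∞} {s : ℝ} {n : ℕ} (hs : 0 ≤ s) (hn : 2 ≤ n)
    (hp : ENNReal.ofReal (s / n) ≤ p) :
    (1 - p) ^ (n - 1) ≤ ENNReal.ofReal (exp (-(s / 2))) := by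
  have hn₀ : (0 : ℝ) < n := by positivity
  have hbase : 1 - p ≤ ENNReal.ofReal (exp (-(s / n))) :=
    calc 1 - p ≤ 1 - ENNReal.ofReal (s / n) := tsub_le_tsub_left hp 1
      _ = ENNReal.ofReal (1 - s / n) := by
        rw [← ENNReal.ofReal_one, ENNReal.ofReal_sub _ (by positivity)]
      _ ≤ ENNReal.ofReal (exp (-(s / n))) := by
        gcongr; linarith [add_one_le_exp (-(s / n))]
  have hexp : ((n - 1 : ℕ) : ℝ) * -(s / n) ≤ -(s / 2) := by
    rw [Nat.cast_sub (by omega), Nat.cast_one, mul_neg, neg_le_neg_iff, mul_div_assoc',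
      le_div_iff₀ hn₀]
    have : (2 : ℝ) ≤ n := by exact_mod_cast hn
    nlinarith
  calc (1 - p) ^ (n - 1) ≤ ENNReal.ofReal (exp (-(s / n))) ^ (n - 1) := by gcongr
    _ = ENNReal.ofReal (exp (((n - 1 : ℕ) : ℝ) * -(s / n))) := by
      rw [← ENNReal.ofReal_pow (exp_nonneg _), ← exp_nat_mul]
    _ ≤ ENNReal.ofReal (exp (-(s / 2))) := by gcongr

lemma tendsto_ofReal_exp_neg_mul_pow_atTop {q : ℝ} (hq : 0 < q) {d : ℕ} (hd : d ≠ 0) :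
    Tendsto (fun t : ℝ ↦ ENNReal.ofReal (exp (-(q * (t / 3) ^ d / 2)))) atTop (𝓝 0) := by
  have hpow : Tendsto (fun t : ℝ ↦ q * (t / 3) ^ d / 2) atTop atTop :=
    (((tendsto_pow_atTop hd).comp (tendsto_id.atTop_div_const three_pos)).const_mul_atTop
      hq).atTop_div_const two_pos
  simpa using ENNReal.tendsto_ofReal (tendsto_exp_neg_atTop_nhds_zero.comp hpow)

lemma not_subset_closedBall_of_ofReal_le_mul_ediam {α : Type*} [PseudoMetricSpace α]
    {A : Set α} {x : α} {t N : ℝ} (ht : 0 < t) (hN : 0 < N)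
    (h : ENNReal.ofReal t ≤ ENNReal.ofReal N * ediam A) :
    ¬ A ⊆ closedBall x (t / 3 / N) := by
  intro hA
  have hρ : 0 ≤ t / 3 / N := by positivity
  have hdiam : ediam A ≤ 2 * ENNReal.ofReal (t / 3 / N) :=
    (ediam_mono (hA.trans_eq (closedEBall_ofReal hρ).symm)).trans ediam_closedEBall_le
  have : ENNReal.ofReal t ≤ ENNReal.ofReal (2 * t / 3) :=
    calc ENNReal.ofReal t ≤ ENNReal.ofReal N * (2 * ENNReal.ofReal (t / 3 / N)) :=
          h.trans (by gcongr)
      _ = ENNReal.ofReal (2 * t / 3) := by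
        rw [← ENNReal.ofReal_ofNat 2, ← ENNReal.ofReal_mul zero_le_two,
          ← ENNReal.ofReal_mul hN.le]
        congr 1
        field_simp
  rw [ENNReal.ofReal_le_ofReal_iff (by positivity)] at this
  linarith

lemma measure_forall_notMem_eq_pow {Ω E ι : Type*} [MeasurableSpace Ω] [MeasurableSpace E]
    {P : Measure Ω} {μ : Measure E} [IsProbabilityMeasure μ] {X : ι → Ω → E}
    (hind : iIndepFun X P) (hlaw : ∀ i, P.map (X i) = μ) {A : Set E} (hA : MeasurableSet A)
    (s : Finset ι) :
    P {ω | ∀ i ∈ s, X i ω ∉ A} = (1 - μ A) ^ s.card := by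
  have hX : ∀ i, AEMeasurable (X i) P := fun i ↦
    aemeasurable_of_map_neZero (by rw [hlaw i]; infer_instance)
  have hcompl : ∀ i, P (X i ⁻¹' Aᶜ) = 1 - μ A := fun i ↦ by
    rw [← Measure.map_apply_of_aemeasurable (hX i) hA.compl, hlaw i, prob_compl_eq_one_sub hA]
  have hset : {ω | ∀ i ∈ s, X i ω ∉ A} = ⋂ i ∈ s, X i ⁻¹' Aᶜ := by ext; simp
  rw [hset, hind.meas_biInter fun i _ ↦ ⟨Aᶜ, hA.compl, rfl⟩,
    Finset.prod_congr rfl fun i _ ↦ hcompl i, Finset.prod_const]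

section Cone

variable {E : Type*} [NormedAddCommGroup E] [InnerProductSpace ℝ E]

def cone (a : E) (θ : ℝ) : Set E := {u | ‖u‖ * cos θ ≤ ⟪u, a⟫}

lemma isClosed_cone (a : E) (θ : ℝ) : IsClosed (cone a θ) :=
  isClosed_le (continuous_norm.mul continuous_const) (continuous_id.inner continuous_const)

lemma smul_mem_cone {a u : E} {θ r : ℝ} (hu : u ∈ cone a θ) (hr : 0 ≤ r) :
    r • u ∈ cone a θ := by
  simp only [cone, mem_ofPred_eq, norm_smul, norm_of_nonneg hr, real_inner_smul_left, mul_assoc]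
  exact mul_le_mul_of_nonneg_left hu hr

lemma angle_le_of_mem_cone {a u : E} {θ : ℝ} (ha : ‖a‖ = 1) (hθ₀ : 0 ≤ θ)
    (hu : u ∈ cone a θ) (hu₀ : u ≠ 0) : angle u a ≤ θ := by
  have hcos : cos θ ≤ cos (angle u a) := by
    rw [cos_angle, ha, mul_one, le_div_iff₀ (norm_pos_iff.2 hu₀), mul_comm]
    exact hu
  by_contra! h
  exact (cos_lt_cos_of_nonneg_of_le_pi hθ₀ (angle_le_pi u a) h).not_ge hcos

lemma norm_sub_lt_of_mem_cone {a w z : E} {θ : ℝ} (ha : ‖a‖ = 1) (hθ₀ : 0 ≤ θ)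
    (hθ : θ < π / 6) (hw : w ∈ cone a θ) (hz : z ∈ cone a θ) (hz₀ : z ≠ 0) (hzw : ‖z‖ ≤ ‖w‖) :
    ‖w - z‖ < ‖w‖ := by
  have hz_pos : 0 < ‖z‖ := norm_pos_iff.2 hz₀
  have hw₀ : w ≠ 0 := norm_pos_iff.1 (hz_pos.trans_le hzw)
  have hangle : angle w z < π / 3 :=
    calc angle w z ≤ angle w a + angle z a := by
          simpa only [angle_comm a z] using angle_le_angle_add_angle w a z
      _ ≤ θ + θ :=
          add_le_add (angle_le_of_mem_cone ha hθ₀ hw hw₀) (angle_le_of_mem_cone ha hθ₀ hz hz₀)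
      _ < π / 3 := by linarith
  have hcos : 1 / 2 < cos (angle w z) := by
    rw [← cos_pi_div_three]
    exact cos_lt_cos_of_nonneg_of_le_pi (angle_nonneg w z) (by linarith [pi_pos]) hangle
  have hinner : ‖z‖ ^ 2 < 2 * ⟪w, z⟫ := by
    rw [← cos_angle_mul_norm_mul_norm]
    have hwz : 0 < ‖w‖ * ‖z‖ := mul_pos (norm_pos_iff.2 hw₀) hz_pos
    nlinarith [mul_le_mul_of_nonneg_right hzw hz_pos.le, mul_lt_mul_of_pos_right hcos hwz]
  have hsq : ‖w - z‖ ^ 2 < ‖w‖ ^ 2 := by rw [norm_sub_sq_real]; linarith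
  exact lt_of_pow_lt_pow_left₀ 2 (norm_nonneg w) hsq

lemma measure_cone_inter_closedBall_pos [MeasurableSpace E] [BorelSpace E] (μ : Measure E)
    [μ.IsOpenPosMeasure] {a : E} (ha : ‖a‖ = 1) {θ : ℝ} (hθ : cos θ < 1) :
    0 < μ (cone a θ ∩ closedBall 0 1) := by
  have hopen : IsOpen ({u : E | ‖u‖ * cos θ < ⟪u, a⟫} ∩ ball 0 1) :=
    (isOpen_lt (continuous_norm.mul continuous_const)
      (continuous_id.inner continuous_const)).inter isOpen_ball
  have hmem : (2⁻¹ : ℝ) • a ∈ {u : E | ‖u‖ * cos θ < ⟪u, a⟫} ∩ ball 0 1 := by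
    simp only [mem_inter_iff, mem_ofPred_eq, mem_ball_zero_iff, norm_smul, real_inner_smul_left,
      real_inner_self_eq_norm_sq, ha]
    norm_num
    linarith
  calc 0 < μ ({u : E | ‖u‖ * cos θ < ⟪u, a⟫} ∩ ball 0 1) := hopen.measure_pos μ ⟨_, hmem⟩
    _ ≤ μ (cone a θ ∩ closedBall 0 1) :=
      measure_mono (inter_subset_inter (fun _ hu ↦ le_of_lt (α := ℝ) hu) ball_subset_closedBall)

lemma measure_image_cone_inter_closedBall_le [MeasurableSpace E] {μ : Measure E} {x : E}
    (hμx : μ {x} = 0) (a : E) (θ : ℝ) {ρ : ℝ} (hρ : 0 ≤ ρ) :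
    μ ((fun u ↦ x + ρ • u) '' (cone a θ ∩ closedBall 0 1)) ≤
      μ ((· - x) ⁻¹' (cone a θ ∩ (closedBall 0 ρ \ {0}))) := by
  rw [← measure_sdiff_null hμx]
  refine measure_mono ?_
  rintro _ ⟨⟨u, ⟨hu, hu₁⟩, rfl⟩, hne⟩
  rw [mem_closedBall_zero_iff] at hu₁
  simp only [mem_preimage, add_sub_cancel_left]
  refine ⟨smul_mem_cone hu hρ, ?_, ?_⟩
  · simpa [norm_smul, abs_of_nonneg hρ] using mul_le_of_le_one_right hρ hu₁
  · simpa using hne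

variable {ι κ : Type*} {a : κ → E} {θ : ℝ} {x : E}

theorem voronoiCell_subset_closedBall (ha : ∀ j, ‖a j‖ = 1) (hθ₀ : 0 ≤ θ) (hθ : θ < π / 6)
    (hcover : ⋃ j, cone (a j) θ = univ) {p : ι → E} {s : Finset ι} {ρ : ℝ}
    (hp : ∀ j, ∃ i ∈ s, p i - x ∈ cone (a j) θ ∩ (closedBall 0 ρ \ {0})) :
    voronoiCell x p s ⊆ closedBall x ρ := by
  intro u hu
  by_contra hfar
  rw [mem_closedBall, not_le, dist_eq_norm] at hfar
  obtain ⟨j, hj⟩ := mem_iUnion.1 (hcover ▸ mem_univ (u - x))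
  obtain ⟨i, hi, hcone, hball, hne⟩ := hp j
  rw [mem_closedBall_zero_iff] at hball
  have hcloser := norm_sub_lt_of_mem_cone (ha j) hθ₀ hθ hj hcone hne (by linarith)
  have := hu i hi
  rw [dist_eq_norm, dist_eq_norm, ← sub_sub_sub_cancel_right u (p i) x] at this
  linarith

variable [MeasurableSpace E] [BorelSpace E] [Fintype κ] {Ω : Type*} [MeasurableSpace Ω]
  {P : Measure Ω} {μ : Measure E} [IsProbabilityMeasure μ]

theorem measure_not_voronoiCell_subset_closedBall_le {X : ι → Ω → E} (hind : iIndepFun X P)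
    (hlaw : ∀ i, P.map (X i) = μ) (ha : ∀ j, ‖a j‖ = 1) (hθ₀ : 0 ≤ θ) (hθ : θ < π / 6)
    (hcover : ⋃ j, cone (a j) θ = univ) (hμx : μ {x} = 0) {ρ : ℝ} (hρ : 0 ≤ ρ)
    (s : Finset ι) :
    P {ω | ¬ voronoiCell x (X · ω) s ⊆ closedBall x ρ} ≤
      ∑ j, (1 - μ ((fun u ↦ x + ρ • u) '' (cone (a j) θ ∩ closedBall 0 1))) ^ s.card := by
  set B : κ → Set E := fun j ↦ (· - x) ⁻¹' (cone (a j) θ ∩ (closedBall 0 ρ \ {0}))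
  have hB : ∀ j, MeasurableSet (B j) := fun j ↦
    ((isClosed_cone _ _).measurableSet.inter
      (isClosed_closedBall.measurableSet.diff (measurableSet_singleton 0))).preimage
      (measurable_sub_const x)
  have hsub : {ω | ¬ voronoiCell x (X · ω) s ⊆ closedBall x ρ} ⊆
      ⋃ j, {ω | ∀ i ∈ s, X i ω ∉ B j} := by
    intro ω hω
    by_contra hall
    simp only [mem_iUnion, mem_ofPred_eq, not_exists, not_forall, not_not, exists_prop] at hall
    exact hω (voronoiCell_subset_closedBall ha hθ₀ hθ hcover hall)
  calc P {ω | ¬ voronoiCell x (X · ω) s ⊆ closedBall x ρ}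
      ≤ ∑ j, P {ω | ∀ i ∈ s, X i ω ∉ B j} :=
        (measure_mono hsub).trans (measure_iUnion_fintype_le _ _)
    _ = ∑ j, (1 - μ (B j)) ^ s.card :=
      Finset.sum_congr rfl fun j _ ↦ measure_forall_notMem_eq_pow hind hlaw (hB j) s
    _ ≤ _ := Finset.sum_le_sum fun j _ ↦ pow_le_pow_left₀ zero_le
      (tsub_le_tsub_left (measure_image_cone_inter_closedBall_le hμx _ _ hρ) 1) _

theorem limsup_measure_le_mul_ediam_voronoiCell_le {X : ℕ → Ω → E} (hind : iIndepFun X P)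
    (hlaw : ∀ i, P.map (X i) = μ) (ha : ∀ j, ‖a j‖ = 1) (hθ₀ : 0 ≤ θ) (hθ : θ < π / 6)
    (hcover : ⋃ j, cone (a j) θ = univ) (hμx : μ {x} = 0)
    {d : ℕ} (hd : 0 < d) {q : κ → ℝ} (hq : ∀ j, 0 ≤ q j)
    (hbnd : ∀ j, ∀ᶠ r in 𝓝[>] 0,
      ENNReal.ofReal (q j * r ^ d) ≤ μ ((fun u ↦ x + r • u) '' (cone (a j) θ ∩ closedBall 0 1)))
    {t : ℝ} (ht : 0 < t) :
    limsup (fun n : ℕ ↦ P {ω | ENNReal.ofReal t ≤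
      (n : ℝ≥0∞) ^ ((1 : ℝ) / d) * ediam (voronoiCell x (X · ω) (Finset.range (n - 1)))})
      atTop ≤ ∑ j, ENNReal.ofReal (exp (-(q j * (t / 3) ^ d / 2))) := by
  set ρ : ℕ → ℝ := fun n ↦ t / 3 / (n : ℝ) ^ ((1 : ℝ) / d)
  have hρ_pow : ∀ n : ℕ, ρ n ^ d = (t / 3) ^ d / n := fun n ↦ by
    rw [div_pow, one_div, rpow_inv_natCast_pow n.cast_nonneg hd.ne']
  have hρ : Tendsto ρ atTop (𝓝[>] 0) := by
    refine tendsto_nhdsWithin_iff.2 ⟨?_, ?_⟩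
    · exact tendsto_const_nhds.div_atTop
        ((tendsto_rpow_atTop (by positivity)).comp tendsto_natCast_atTop_atTop)
    · filter_upwards [eventually_gt_atTop 0] with n hn
      exact div_pos (by positivity) (rpow_pos_of_pos (by exact_mod_cast hn) _)
  refine limsup_le_of_le (h := ?_)
  filter_upwards [hρ.eventually (eventually_all.2 hbnd), eventually_ge_atTop 2] with n hn hn₂
  have hN : 0 < (n : ℝ) ^ ((1 : ℝ) / d) := by positivity
  calc P {ω | ENNReal.ofReal t ≤
        (n : ℝ≥0∞) ^ ((1 : ℝ) / d) * ediam (voronoiCell x (X · ω) (Finset.range (n - 1)))}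
      ≤ P {ω | ¬ voronoiCell x (X · ω) (Finset.range (n - 1)) ⊆ closedBall x (ρ n)} := by
        refine measure_mono fun ω hω ↦ not_subset_closedBall_of_ofReal_le_mul_ediam ht hN ?_
        rwa [← ENNReal.ofReal_natCast,
          ENNReal.ofReal_rpow_of_nonneg n.cast_nonneg (by positivity)] at hω
    _ ≤ ∑ j, (1 - μ ((fun u ↦ x + ρ n • u) '' (cone (a j) θ ∩ closedBall 0 1))) ^ (n - 1) := by
        have := measure_not_voronoiCell_subset_closedBall_le hind hlaw ha hθ₀ hθ hcover hμx
          (ρ := ρ n) (div_nonneg (by positivity) hN.le) (Finset.range (n - 1))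
        rwa [Finset.card_range] at this
    _ ≤ _ := Finset.sum_le_sum fun j _ ↦
        one_sub_pow_pred_le_exp (mul_nonneg (hq j) (by positivity)) hn₂
          (by rw [mul_div_assoc, ← hρ_pow]; exact hn j)

end Cone

section Density

variable {E : Type*} [NormedAddCommGroup E] [NormedSpace ℝ E] [FiniteDimensional ℝ E]
  [MeasurableSpace E] [BorelSpace E] (ν : Measure E) [ν.IsAddHaarMeasure]
  {μ : Measure E} [IsFiniteMeasure μ] {x : E} {K : Set E} {L : ℝ}

lemma toReal_addHaar_image_smul (K : Set E) {r : ℝ} (hr : 0 ≤ r) :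
    (ν ((fun u ↦ r • u) '' K)).toReal = r ^ Module.finrank ℝ E * (ν K).toReal := by
  rw [image_smul, Measure.addHaar_smul_of_nonneg ν hr, ENNReal.toReal_mul,
    ENNReal.toReal_ofReal (by positivity)]

lemma eventually_ofReal_mul_pow_le_measure_image (hK₀ : ν K ≠ 0) (hK : ν K ≠ ∞) {c : ℝ}
    (hc : c < L)
    (h : Tendsto (fun r : ℝ ↦ (μ ((fun u ↦ x + r • u) '' K)).toReal /
      (ν ((fun u ↦ r • u) '' K)).toReal) (𝓝[>] 0) (𝓝 L)) :
    ∀ᶠ r in 𝓝[>] 0, ENNReal.ofReal (c * (ν K).toReal * r ^ Module.finrank ℝ E) ≤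
      μ ((fun u ↦ x + r • u) '' K) := by
  have hK_pos : 0 < (ν K).toReal := ENNReal.toReal_pos hK₀ hK
  filter_upwards [h.eventually (eventually_gt_nhds hc), self_mem_nhdsWithin] with r hr hr₀
  have hr₀ : 0 < r := hr₀
  rw [toReal_addHaar_image_smul ν K hr₀.le, lt_div_iff₀ (by positivity)] at hr
  rw [← ENNReal.ofReal_toReal (measure_ne_top μ ((fun u ↦ x + r • u) '' K))]
  exact ENNReal.ofReal_le_ofReal (by linarith)

lemma measure_singleton_eq_zero_of_tendsto [Nontrivial E] (hK₀ : ν K ≠ 0) (hK : ν K ≠ ∞)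
    (h0 : (0 : E) ∈ K)
    (h : Tendsto (fun r : ℝ ↦ (μ ((fun u ↦ x + r • u) '' K)).toReal /
      (ν ((fun u ↦ r • u) '' K)).toReal) (𝓝[>] 0) (𝓝 L)) :
    μ {x} = 0 := by
  have hK_pos : 0 < (ν K).toReal := ENNReal.toReal_pos hK₀ hK
  have hvol : Tendsto (fun r : ℝ ↦ (ν ((fun u ↦ r • u) '' K)).toReal) (𝓝[>] 0) (𝓝 0) := by
    have hpow : Tendsto (fun r : ℝ ↦ r ^ Module.finrank ℝ E * (ν K).toReal) (𝓝[>] 0) (𝓝 0) :=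
      tendsto_nhdsWithin_of_tendsto_nhds <| ((continuous_pow _).mul continuous_const).tendsto' _ _
        (by simp [Module.finrank_pos.ne'])
    refine hpow.congr' ?_
    filter_upwards [self_mem_nhdsWithin] with r hr
    exact (toReal_addHaar_image_smul ν K (le_of_lt hr)).symm
  have hμ : Tendsto (fun r : ℝ ↦ (μ ((fun u ↦ x + r • u) '' K)).toReal) (𝓝[>] 0) (𝓝 0) := by
    have := h.mul hvol
    rw [mul_zero] at this
    refine this.congr' ?_
    filter_upwards [self_mem_nhdsWithin] with r (hr : 0 < r)
    rw [toReal_addHaar_image_smul ν K hr.le]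
    exact div_mul_cancel₀ _ (by positivity)
  have hle : ∀ r : ℝ, (μ {x}).toReal ≤ (μ ((fun u ↦ x + r • u) '' K)).toReal := fun r ↦
    ENNReal.toReal_mono (measure_ne_top _ _)
      (measure_mono (singleton_subset_iff.2 ⟨0, h0, by simp⟩))
  have hx : (μ {x}).toReal = 0 := le_antisymm (ge_of_tendsto' hμ hle) ENNReal.toReal_nonneg
  exact (ENNReal.toReal_eq_zero_iff _).1 hx |>.resolve_right (measure_ne_top _ _)

end Density

theorem voronoi_diam_rate_general
    (d : ℕ) (hd : 0 < d)
    (μ : Measure (EuclideanSpace ℝ (Fin d))) [IsProbabilityMeasure μ]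
    (f : EuclideanSpace ℝ (Fin d) → ℝ≥0∞)
    (x : EuclideanSpace ℝ (Fin d)) (hfx : 0 < f x) (hfx' : f x < ∞)
    -- the cones `C j` of angle `π/4` (half-angle `π/8`) covering `ℝ^d`
    (γ : ℕ) (a : Fin γ → EuclideanSpace ℝ (Fin d)) (ha : ∀ j, ‖a j‖ = 1)
    (C : Fin γ → Set (EuclideanSpace ℝ (Fin d)))
    (hC : ∀ j, C j = {u | ‖u‖ * Real.cos (Real.pi / 8) ≤ (inner ℝ u (a j) : ℝ)})
    (hcover : (⋃ j, C j) = Set.univ)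
    -- the cone-version Lebesgue density property at `x`
    (hdens : ∀ j, Tendsto
      (fun r : ℝ =>
        (μ ((fun u => x + r • u) '' (C j ∩ Metric.closedBall 0 1))).toReal /
          (volume ((fun u => r • u) ''
            (C j ∩ Metric.closedBall (0 : EuclideanSpace ℝ (Fin d)) 1))).toReal)
      (nhdsWithin 0 (Set.Ioi 0)) (nhds (f x).toReal))
    -- the i.i.d. sample
    {Ω : Type*} [MeasurableSpace Ω] (P : Measure Ω)
    (X : ℕ → Ω → EuclideanSpace ℝ (Fin d))
    (hind : iIndepFun X P)
    (hlaw : ∀ i, Measure.map (X i) P = μ)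
    -- the Voronoi cell of `x` determined by `x` and `n - 1` sample points
    (S : ℕ → Ω → Set (EuclideanSpace ℝ (Fin d)))
    (hS : ∀ n ω, S n ω =
      {u | ∀ i ∈ Finset.range (n - 1), dist u x ≤ dist u (X i ω)}) :
    Tendsto
      (fun t : ℝ =>
        Filter.limsup
          (fun n : ℕ =>
            P {ω | ENNReal.ofReal t ≤
              (n : ℝ≥0∞) ^ ((1 : ℝ) / d) * EMetric.diam (S n ω)})
          atTop)
      atTop (nhds (0 : ℝ≥0∞)) := by
  obtain rfl : C = fun j ↦ cone (a j) (π / 8) := funext hC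
  obtain rfl : S = fun n ω ↦ voronoiCell x (X · ω) (Finset.range (n - 1)) := funext₂ hS
  have : Nonempty (Fin d) := ⟨⟨0, hd⟩⟩
  have hcos : cos (π / 8) < 1 := by
    rw [← cos_zero]
    exact cos_lt_cos_of_nonneg_of_le_pi le_rfl (by linarith [pi_pos]) (by positivity)
  have hK₀ : ∀ j, volume (cone (a j) (π / 8) ∩ closedBall 0 1) ≠ 0 := fun j ↦
    (measure_cone_inter_closedBall_pos volume (ha j) hcos).ne'
  have hK : ∀ j, volume (cone (a j) (π / 8) ∩ closedBall 0 1) ≠ ∞ := fun j ↦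
    measure_ne_top_of_subset inter_subset_right measure_closedBall_lt_top.ne
  obtain ⟨j₀, -⟩ := mem_iUnion.1 (hcover ▸ mem_univ x)
  have hμx : μ {x} = 0 := measure_singleton_eq_zero_of_tendsto volume (hK₀ j₀) (hK j₀)
    ⟨by simp [cone], mem_closedBall_self zero_le_one⟩ (hdens j₀)
  have hfx₀ : 0 < (f x).toReal := ENNReal.toReal_pos hfx.ne' hfx'.ne
  have hbnd := fun j ↦ eventually_ofReal_mul_pow_le_measure_image volume (hK₀ j) (hK j)
    (half_lt_self hfx₀) (hdens j)
  simp only [finrank_euclideanSpace_fin] at hbnd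
  have hq : ∀ j,
      0 < (f x).toReal / 2 * (volume (cone (a j) (π / 8) ∩ closedBall 0 1)).toReal :=
    fun j ↦ mul_pos (half_pos hfx₀) (ENNReal.toReal_pos (hK₀ j) (hK j))
  refine tendsto_of_tendsto_of_tendsto_of_le_of_le' tendsto_const_nhds
    (by simpa using tendsto_finsetSum Finset.univ fun j _ ↦
      tendsto_ofReal_exp_neg_mul_pow_atTop (hq j) hd.ne')
    (Eventually.of_forall fun _ ↦ zero_le) ?_
  filter_upwards [eventually_gt_atTop 0] with t ht
  exact limsup_measure_le_mul_ediam_voronoiCell_le hind hlaw ha (by positivity)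
    (by linarith [pi_pos]) hcover hμx hd (fun j ↦ (hq j).le) hbnd ht

/-- Diameter of a typical Voronoi cell: if `x` satisfies `f(x) > 0` and the
cone-version Lebesgue density property (for a family of cones of angle `π/4`
covering `ℝ^d`), then conditionally on `X_1 = x`,
`lim_{t→∞} limsup_{n→∞} P{n^{1/d} diam(S_1) ≥ t} = 0`. -/
theorem voronoi_diam_rate
    (d : ℕ) (hd : 0 < d)
    (μ : Measure (EuclideanSpace ℝ (Fin d))) [IsProbabilityMeasure μ]
    (f : EuclideanSpace ℝ (Fin d) → ℝ≥0∞) (hf : μ = volume.withDensity f)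
    (x : EuclideanSpace ℝ (Fin d)) (hfx : 0 < f x) (hfx' : f x < ∞)
    -- the cones `C j` of angle `π/4` (half-angle `π/8`) covering `ℝ^d`
    (γ : ℕ) (a : Fin γ → EuclideanSpace ℝ (Fin d)) (ha : ∀ j, ‖a j‖ = 1)
    (C : Fin γ → Set (EuclideanSpace ℝ (Fin d)))
    (hC : ∀ j, C j = {u | ‖u‖ * Real.cos (Real.pi / 8) ≤ (inner ℝ u (a j) : ℝ)})
    (hcover : (⋃ j, C j) = Set.univ)
    -- the cone-version Lebesgue density property at `x`
    (hdens : ∀ j, Tendsto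
      (fun r : ℝ =>
        (μ ((fun u => x + r • u) '' (C j ∩ Metric.closedBall 0 1))).toReal /
          (volume ((fun u => r • u) ''
            (C j ∩ Metric.closedBall (0 : EuclideanSpace ℝ (Fin d)) 1))).toReal)
      (nhdsWithin 0 (Set.Ioi 0)) (nhds (f x).toReal))
    -- the i.i.d. sample
    {Ω : Type*} [MeasurableSpace Ω] (P : Measure Ω) [IsProbabilityMeasure P]
    (X : ℕ → Ω → EuclideanSpace ℝ (Fin d))
    (hmeas : ∀ i, Measurable (X i))
    (hind : iIndepFun X P)
    (hlaw : ∀ i, Measure.map (X i) P = μ)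
    -- the Voronoi cell of `x` determined by `x` and `n - 1` sample points
    (S : ℕ → Ω → Set (EuclideanSpace ℝ (Fin d)))
    (hS : ∀ n ω, S n ω =
      {u | ∀ i ∈ Finset.range (n - 1), dist u x ≤ dist u (X i ω)}) :
    Tendsto
      (fun t : ℝ =>
        Filter.limsup
          (fun n : ℕ =>
            P {ω | ENNReal.ofReal t ≤
              (n : ℝ≥0∞) ^ ((1 : ℝ) / d) * EMetric.diam (S n ω)})
          atTop)
      atTop (nhds (0 : ℝ≥0∞)) :=
  voronoi_diam_rate_general d hd μ f x hfx hfx' γ a ha C hC hcover hdens P X hind hlaw S hS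
end
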